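/- For weakly compact convex sets P, P_n of probability measures on a Polish space, JS(P_n,P) → 0 as n → ∞ if and only if V(P_n,P) → 0. -/

import Mathlib

open MeasureTheory Real ENNReal Filter Topology
open scoped Classical

noncomputable def klDiv {X : Type*} [MeasurableSpace X] (μ ν : Measure X) : EReal :=
  if μ ≪ ν ∧ Integrable (fun x => Real.log (μ.rnDeriv ν x).toReal) μ
  then ((∫ x, Real.log (μ.rnDeriv ν x).toReal ∂μ : ℝ) : EReal)
  else ⊤

noncomputable def tvDist {X : Type*} [MeasurableSpace X] (μ ν : Measure X) : ℝ :=
  ⨆ A : {A : Set X // MeasurableSet A}, |(μ A).toReal - (ν A).toReal|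

noncomputable def genKL {X : Type*} [MeasurableSpace X]
    (P Q : Set (ProbabilityMeasure X)) : EReal :=
  ⨆ μ ∈ P, ⨅ ν ∈ Q, klDiv μ.toMeasure ν.toMeasure

noncomputable def genV {X : Type*} [MeasurableSpace X]
    (P Q : Set (ProbabilityMeasure X)) : ℝ :=
  max (⨆ μ : P, ⨅ ν : Q, tvDist μ.1.toMeasure ν.1.toMeasure)
      (⨆ ν : Q, ⨅ μ : P, tvDist μ.1.toMeasure ν.1.toMeasure)

def ConvexPM {X : Type*} [MeasurableSpace X] (P : Set (ProbabilityMeasure X)) : Prop :=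
  ∀ μ ∈ P, ∀ ν ∈ P, ∀ a b : ℝ≥0∞, a + b = 1 →
    ∃ κ ∈ P, κ.toMeasure = a • μ.toMeasure + b • ν.toMeasure

def midSet {X : Type*} [MeasurableSpace X]
    (P Q : Set (ProbabilityMeasure X)) : Set (ProbabilityMeasure X) :=
  {κ | ∃ μ ∈ P, ∃ ν ∈ Q, κ.toMeasure = (2:ℝ≥0∞)⁻¹ • μ.toMeasure + (2:ℝ≥0∞)⁻¹ • ν.toMeasure}

noncomputable def genJS {X : Type*} [MeasurableSpace X]
    (P Q : Set (ProbabilityMeasure X)) : EReal :=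
  ((1/2 : ℝ) : EReal) * genKL P (midSet P Q) + ((1/2 : ℝ) : EReal) * genKL Q (midSet P Q)

/-!
Write `KL(μ‖κ) = ∫ klFun (dμ/dκ) dκ` with `klFun x = x log x + 1 - x`. If `κ = (μ + ν)/2` then
`dμ/dκ ≤ 2`, and `klFun x ≤ |x - 1|` on `[0, 2]` bounds `KL(μ‖κ)` by
`‖μ - κ‖₁ = 2 V(μ, κ) = V(μ, ν)`; hence `JS(P, Q) ≤ V(P, Q)`.

Conversely, Jensen's inequality on a set `A` and `klFun x ≥ (1 - x)²/2` on `[0, 1]` give the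
Pinsker-type bound `V(μ, κ)² ≤ 2 KL(μ‖κ)`. So if `JS(P, Q)` is small, every `μ ∈ P` is `ε`-close
to a midpoint `(μ' + ν)/2` with `μ' ∈ P`, `ν ∈ Q`. Two midpoints with a common endpoint are half
as far apart as their other endpoints, so by convexity of `Q` the excess
`e = sup_{μ ∈ P} inf_{ν ∈ Q} V(μ, ν)` satisfies `e ≤ ε + e/2`, that is `e ≤ 2ε`.
-/

open Set

section TotalVariation

variable {X : Type*} [MeasurableSpace X]

instance : Nonempty {A : Set X // MeasurableSet A} := ⟨⟨∅, .empty⟩⟩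

instance isProbabilityMeasure_half_add_half (μ ν : Measure X) [IsProbabilityMeasure μ]
    [IsProbabilityMeasure ν] : IsProbabilityMeasure ((2 : ℝ≥0∞)⁻¹ • μ + (2 : ℝ≥0∞)⁻¹ • ν) :=
  ⟨by simp [ENNReal.inv_two_add_inv_two]⟩

lemma measureReal_half_add_half (μ ν : Measure X) [IsFiniteMeasure μ] [IsFiniteMeasure ν]
    (A : Set X) :
    ((2 : ℝ≥0∞)⁻¹ • μ + (2 : ℝ≥0∞)⁻¹ • ν).real A = μ.real A / 2 + ν.real A / 2 := by
  rw [measureReal_add_apply (by simp [ENNReal.mul_eq_top]) (by simp [ENNReal.mul_eq_top])]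
  simp [div_eq_inv_mul]

lemma tvDist_le {μ ν : Measure X} {c : ℝ} (h : ∀ A, MeasurableSet A → |μ.real A - ν.real A| ≤ c) :
    tvDist μ ν ≤ c :=
  ciSup_le fun A => h A.1 A.2

variable {μ ν ξ κ : Measure X} [IsProbabilityMeasure μ] [IsProbabilityMeasure ν]
  [IsProbabilityMeasure ξ] [IsProbabilityMeasure κ]

lemma abs_measureReal_sub_le_one (A : Set X) : |μ.real A - ν.real A| ≤ 1 :=
  abs_sub_le_iff.2
    ⟨by linarith [measureReal_nonneg (μ := ν) (s := A), measureReal_le_one (μ := μ) (s := A)],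
      by linarith [measureReal_nonneg (μ := μ) (s := A), measureReal_le_one (μ := ν) (s := A)]⟩

lemma abs_measureReal_sub_le_tvDist {A : Set X} (hA : MeasurableSet A) :
    |μ.real A - ν.real A| ≤ tvDist μ ν :=
  le_ciSup (f := fun A : {A : Set X // MeasurableSet A} => |μ.real A - ν.real A|)
    ⟨1, by rintro _ ⟨A, rfl⟩; exact abs_measureReal_sub_le_one A.1⟩ ⟨A, hA⟩

lemma tvDist_nonneg : 0 ≤ tvDist μ ν :=
  (abs_nonneg _).trans (abs_measureReal_sub_le_tvDist .empty)

lemma tvDist_le_one : tvDist μ ν ≤ 1 :=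
  tvDist_le fun A _ => abs_measureReal_sub_le_one A

lemma tvDist_comm (μ ν : Measure X) : tvDist μ ν = tvDist ν μ := by
  simp only [tvDist, abs_sub_comm]

lemma tvDist_triangle : tvDist μ ν ≤ tvDist μ ξ + tvDist ξ ν :=
  tvDist_le fun _ hA => (abs_sub_le _ _ _).trans
    (add_le_add (abs_measureReal_sub_le_tvDist hA) (abs_measureReal_sub_le_tvDist hA))

lemma tvDist_half_add_half_le (ρ : Measure X) [IsProbabilityMeasure ρ] :
    tvDist ((2 : ℝ≥0∞)⁻¹ • μ + (2 : ℝ≥0∞)⁻¹ • ρ) ((2 : ℝ≥0∞)⁻¹ • ν + (2 : ℝ≥0∞)⁻¹ • ρ)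
      ≤ tvDist μ ν / 2 :=
  tvDist_le fun A hA => by
    rw [measureReal_half_add_half, measureReal_half_add_half,
      show μ.real A / 2 + ρ.real A / 2 - (ν.real A / 2 + ρ.real A / 2)
        = (μ.real A - ν.real A) / 2 by ring, abs_div, abs_two]
    linarith [abs_measureReal_sub_le_tvDist (μ := μ) (ν := ν) hA]

lemma integral_abs_rnDeriv_sub_one_le (hμκ : μ ≪ κ) :
    ∫ x, |(μ.rnDeriv κ x).toReal - 1| ∂κ ≤ 2 * tvDist μ κ := by
  set f := fun x => (μ.rnDeriv κ x).toReal
  have hf : Integrable f κ := Measure.integrable_toReal_rnDeriv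
  set A := {x | 1 ≤ f x}
  have hA : MeasurableSet A :=
    measurableSet_le measurable_const (Measure.measurable_rnDeriv μ κ).ennreal_toReal
  have hA_int : ∫ x in A, |f x - 1| ∂κ = μ.real A - κ.real A := by
    rw [setIntegral_congr_fun hA fun x hx => abs_of_nonneg (sub_nonneg.2 hx),
      integral_sub hf.integrableOn (integrable_const 1),
      Measure.setIntegral_toReal_rnDeriv hμκ, setIntegral_const, smul_eq_mul, mul_one]
  have hAc_int : ∫ x in Aᶜ, |f x - 1| ∂κ = κ.real Aᶜ - μ.real Aᶜ := by
    rw [setIntegral_congr_fun hA.compl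
        fun x (hx : ¬ 1 ≤ f x) => abs_of_neg (sub_neg.2 (not_le.1 hx)),
      integral_congr_ae (ae_of_all _ fun x => neg_sub (f x) 1),
      integral_sub (integrable_const 1) hf.integrableOn,
      Measure.setIntegral_toReal_rnDeriv hμκ, setIntegral_const, smul_eq_mul, mul_one]
  have hint : Integrable (fun x => |f x - 1|) κ := (hf.sub (integrable_const 1)).abs
  rw [← integral_add_compl hA hint, hA_int, hAc_int]
  linarith [le_abs_self (μ.real A - κ.real A), abs_measureReal_sub_le_tvDist (μ := μ) (ν := κ) hA,
    neg_abs_le (μ.real Aᶜ - κ.real Aᶜ), abs_measureReal_sub_le_tvDist (μ := μ) (ν := κ) hA.compl]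

lemma rnDeriv_half_add_half_le_two (μ ν : Measure X) [IsProbabilityMeasure μ]
    [IsProbabilityMeasure ν] :
    μ.rnDeriv ((2 : ℝ≥0∞)⁻¹ • μ + (2 : ℝ≥0∞)⁻¹ • ν) ≤ᵐ[(2 : ℝ≥0∞)⁻¹ • μ + (2 : ℝ≥0∞)⁻¹ • ν] 2 := by
  filter_upwards [Measure.rnDeriv_le_one_of_le (Measure.le_add_right le_rfl),
    Measure.rnDeriv_smul_left_of_ne_top μ ((2 : ℝ≥0∞)⁻¹ • μ + (2 : ℝ≥0∞)⁻¹ • ν)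
      (ENNReal.inv_ne_top.2 two_ne_zero)] with x hle heq
  rw [heq] at hle
  simpa [ENNReal.inv_mul_le_iff] using hle

end TotalVariation

namespace InformationTheory

lemma klFun_le_abs_sub_one {x : ℝ} (hx0 : 0 ≤ x) (hx2 : x ≤ 2) : klFun x ≤ |x - 1| := by
  have hlog : x * Real.log x ≤ x * (x - 1) := by
    rcases hx0.eq_or_lt with rfl | hx
    · simp
    · exact mul_le_mul_of_nonneg_left (Real.log_le_sub_one_of_pos hx) hx0
  have habs : |x - 1| ≤ 1 := abs_le.2 ⟨by linarith, by linarith⟩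
  rw [klFun_apply]
  nlinarith [sq_abs (x - 1), abs_nonneg (x - 1)]

lemma one_sub_sq_div_two_le_klFun {x : ℝ} (hx0 : 0 ≤ x) (hx1 : x ≤ 1) :
    (1 - x) ^ 2 / 2 ≤ klFun x := by
  let g : ℝ → ℝ := fun y => klFun y - (1 - y) ^ 2 / 2
  have hg : ∀ y ∈ Ioo (0 : ℝ) 1, HasDerivAt g (Real.log y + (1 - y)) y := fun y hy => by
    refine ((hasDerivAt_klFun hy.1.ne').sub
      ((((hasDerivAt_id' y).const_sub 1).pow 2).div_const 2)).congr_deriv ?_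
    ring
  have hanti : AntitoneOn g (Icc 0 1) := by
    refine antitoneOn_of_deriv_nonpos (convex_Icc 0 1)
      (by fun_prop) ?_ ?_ <;> rw [interior_Icc]
    · exact fun y hy => (hg y hy).differentiableAt.differentiableWithinAt
    · intro y hy
      rw [(hg y hy).deriv]
      linarith [Real.log_le_sub_one_of_pos hy.1]
  have := hanti ⟨hx0, hx1⟩ ⟨zero_le_one, le_rfl⟩ hx1
  simp only [g, klFun_one, sub_self] at this
  linarith

section

variable {X : Type*} [MeasurableSpace X] {μ ν κ : Measure X}
  [IsProbabilityMeasure μ] [IsProbabilityMeasure ν] [IsProbabilityMeasure κ]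

lemma klDiv_half_add_half_le_tvDist :
    klDiv μ ((2 : ℝ≥0∞)⁻¹ • μ + (2 : ℝ≥0∞)⁻¹ • ν)
      ≤ ENNReal.ofReal (tvDist μ ν) := by
  set κ := (2 : ℝ≥0∞)⁻¹ • μ + (2 : ℝ≥0∞)⁻¹ • ν with hκ
  have hμκ : μ ≪ κ := (Measure.absolutelyContinuous_smul (by simp)).add_right _
  have hf_int : Integrable (fun x => |(μ.rnDeriv κ x).toReal - 1|) κ :=
    (Measure.integrable_toReal_rnDeriv.sub (integrable_const 1)).abs
  have hcontract : 2 * tvDist μ κ ≤ tvDist μ ν := by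
    have h := tvDist_half_add_half_le (μ := ν) (ν := μ) μ
    rw [← add_smul, ENNReal.inv_two_add_inv_two, one_smul, add_comm, ← hκ, tvDist_comm ν] at h
    rw [tvDist_comm μ κ]
    linarith
  calc klDiv μ κ
      = ∫⁻ x, ENNReal.ofReal (klFun (μ.rnDeriv κ x).toReal) ∂κ :=
        klDiv_eq_lintegral_klFun_of_ac hμκ
    _ ≤ ∫⁻ x, ENNReal.ofReal |(μ.rnDeriv κ x).toReal - 1| ∂κ := by
        refine lintegral_mono_ae ?_
        filter_upwards [rnDeriv_half_add_half_le_two μ ν] with x hx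
        refine ENNReal.ofReal_le_ofReal (klFun_le_abs_sub_one ENNReal.toReal_nonneg ?_)
        simpa using ENNReal.toReal_mono (by simp) hx
    _ = ENNReal.ofReal (∫ x, |(μ.rnDeriv κ x).toReal - 1| ∂κ) :=
        (ofReal_integral_eq_lintegral_ofReal hf_int (ae_of_all _ fun _ => abs_nonneg _)).symm
    _ ≤ ENNReal.ofReal (tvDist μ ν) :=
        ENNReal.ofReal_le_ofReal ((integral_abs_rnDeriv_sub_one_le hμκ).trans hcontract)

lemma mul_klFun_le_setIntegral_klFun (hμκ : μ ≪ κ)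
    (hint : Integrable (fun x => klFun (μ.rnDeriv κ x).toReal) κ) (A : Set X) :
    κ.real A * klFun (μ.real A / κ.real A) ≤ ∫ x in A, klFun (μ.rnDeriv κ x).toReal ∂κ := by
  by_cases h0 : κ A = 0
  · simp [measureReal_def, h0, Measure.restrict_eq_zero.2 h0]
  have hκA : 0 < κ.real A := ENNReal.toReal_pos h0 (measure_ne_top κ A)
  have hjensen := convexOn_klFun.map_set_average_le
    continuous_klFun.continuousOn isClosed_Ici h0 (measure_ne_top κ A)
    (ae_of_all _ fun _ => ENNReal.toReal_nonneg) Measure.integrable_toReal_rnDeriv.integrableOn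
    hint.integrableOn
  rw [setAverage_eq, setAverage_eq, Measure.setIntegral_toReal_rnDeriv hμκ, smul_eq_mul,
    smul_eq_mul, inv_mul_eq_div] at hjensen
  rw [← le_div_iff₀' hκA]
  simpa [div_eq_inv_mul] using hjensen

lemma sq_sub_div_two_le_integral_klFun (hμκ : μ ≪ κ)
    (hint : Integrable (fun x => klFun (μ.rnDeriv κ x).toReal) κ) {A : Set X}
    (hle : μ.real A ≤ κ.real A) :
    (κ.real A - μ.real A) ^ 2 / 2 ≤ ∫ x, klFun (μ.rnDeriv κ x).toReal ∂κ := by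
  have hklFun_nonneg : ∀ x, 0 ≤ klFun (μ.rnDeriv κ x).toReal :=
    fun _ => klFun_nonneg ENNReal.toReal_nonneg
  have hp : 0 ≤ μ.real A := measureReal_nonneg
  rcases (measureReal_nonneg (μ := κ) (s := A)).eq_or_lt with hq | hq
  · rw [← hq, le_antisymm (hq ▸ hle) hp]
    simpa using integral_nonneg hklFun_nonneg
  calc (κ.real A - μ.real A) ^ 2 / 2
      ≤ κ.real A * ((1 - μ.real A / κ.real A) ^ 2 / 2) := by
        rw [show κ.real A * ((1 - μ.real A / κ.real A) ^ 2 / 2)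
          = (κ.real A - μ.real A) ^ 2 / 2 / κ.real A by field_simp]
        exact le_div_self (by positivity) hq measureReal_le_one
    _ ≤ κ.real A * klFun (μ.real A / κ.real A) :=
        mul_le_mul_of_nonneg_left (one_sub_sq_div_two_le_klFun (by positivity)
          ((div_le_one hq).2 hle)) hq.le
    _ ≤ ∫ x in A, klFun (μ.rnDeriv κ x).toReal ∂κ := mul_klFun_le_setIntegral_klFun hμκ hint A
    _ ≤ ∫ x, klFun (μ.rnDeriv κ x).toReal ∂κ :=
        setIntegral_le_integral hint (ae_of_all _ hklFun_nonneg)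

lemma sq_tvDist_div_two_le_klDiv :
    ENNReal.ofReal (tvDist μ κ ^ 2 / 2) ≤ klDiv μ κ := by
  by_cases hμκ : μ ≪ κ
  swap; · simp [hμκ]
  by_cases hllr : Integrable (llr μ κ) μ
  swap; · simp [klDiv_of_not_integrable hllr]
  have hint := (integrable_klFun_rnDeriv_iff hμκ).2 hllr
  rw [ENNReal.ofReal_le_iff_le_toReal (klDiv_ne_top hμκ hllr),
    toReal_klDiv_eq_integral_klFun hμκ]
  have hI : 0 ≤ ∫ x, klFun (μ.rnDeriv κ x).toReal ∂κ :=
    integral_nonneg fun _ => klFun_nonneg ENNReal.toReal_nonneg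
  have htv : tvDist μ κ ≤ √(2 * ∫ x, klFun (μ.rnDeriv κ x).toReal ∂κ) :=
    tvDist_le fun A hA => Real.abs_le_sqrt <| by
      rcases le_total (μ.real A) (κ.real A) with h | h
      · nlinarith [sq_sub_div_two_le_integral_klFun hμκ hint h]
      · have hc := sq_sub_div_two_le_integral_klFun hμκ hint (A := Aᶜ)
          (by rw [probReal_compl_eq_one_sub hA, probReal_compl_eq_one_sub hA]; linarith)
        rw [probReal_compl_eq_one_sub hA, probReal_compl_eq_one_sub hA] at hc
        nlinarith
  have := (Real.le_sqrt tvDist_nonneg (by positivity)).1 htv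
  linarith

end

end InformationTheory

section Divergences

variable {X : Type*} [MeasurableSpace X]

lemma klDiv_eq_coe_klDiv (μ κ : Measure X) [IsProbabilityMeasure μ] [IsProbabilityMeasure κ] :
    klDiv μ κ = (InformationTheory.klDiv μ κ : EReal) := by
  unfold klDiv
  split_ifs with h
  · rw [InformationTheory.klDiv_of_ac_of_integrable h.1 h.2, EReal.coe_ennreal_ofReal]
    have := InformationTheory.integral_llr_add_sub_measure_univ_nonneg h.1 h.2
    simp only [probReal_univ, add_sub_cancel_right] at this ⊢
    rw [max_eq_left this]
    rfl
  · rw [InformationTheory.klDiv_eq_top_iff.2 fun hac hint => h ⟨hac, hint⟩]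
    rfl

lemma klDiv_nonneg (μ κ : Measure X) [IsProbabilityMeasure μ] [IsProbabilityMeasure κ] :
    0 ≤ klDiv μ κ := by
  rw [klDiv_eq_coe_klDiv]
  exact EReal.coe_ennreal_nonneg _

lemma klDiv_half_add_half_le (μ ν : Measure X) [IsProbabilityMeasure μ] [IsProbabilityMeasure ν] :
    klDiv μ ((2 : ℝ≥0∞)⁻¹ • μ + (2 : ℝ≥0∞)⁻¹ • ν) ≤ (tvDist μ ν : EReal) := by
  rw [klDiv_eq_coe_klDiv, ← max_eq_left (tvDist_nonneg (μ := μ) (ν := ν)),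
    ← EReal.coe_ennreal_ofReal]
  exact EReal.coe_ennreal_le_coe_ennreal_iff.2 InformationTheory.klDiv_half_add_half_le_tvDist

lemma sq_tvDist_div_two_le_klDiv (μ κ : Measure X) [IsProbabilityMeasure μ]
    [IsProbabilityMeasure κ] : ((tvDist μ κ ^ 2 / 2 : ℝ) : EReal) ≤ klDiv μ κ := by
  rw [klDiv_eq_coe_klDiv, ← max_eq_left (by positivity : 0 ≤ tvDist μ κ ^ 2 / 2),
    ← EReal.coe_ennreal_ofReal]
  exact EReal.coe_ennreal_le_coe_ennreal_iff.2 InformationTheory.sq_tvDist_div_two_le_klDiv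

end Divergences

lemma EReal.lt_of_half_mul_lt {a : EReal} {r : ℝ} (h : ((1 / 2 : ℝ) : EReal) * a < (r / 2 : ℝ)) :
    a < r := by
  induction a using EReal.rec with
  | bot => exact EReal.bot_lt_coe r
  | top =>
    rw [EReal.coe_mul_top_of_pos (by norm_num)] at h
    exact (not_top_lt h).elim
  | coe x =>
    norm_cast at h ⊢
    linarith

section SetDivergences

variable {X : Type*} [MeasurableSpace X] {P Q : Set (ProbabilityMeasure X)}

noncomputable def tvExcess (P Q : Set (ProbabilityMeasure X)) : ℝ :=
  ⨆ μ : P, ⨅ ν : Q, tvDist μ.1.toMeasure ν.1.toMeasure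

lemma genV_eq_max_tvExcess : genV P Q = max (tvExcess P Q) (tvExcess Q P) := by
  simp only [genV, tvExcess]
  congr! 5 with ν μ
  exact tvDist_comm _ _

lemma tvExcess_nonneg : 0 ≤ tvExcess P Q :=
  Real.iSup_nonneg fun _ => Real.iInf_nonneg fun _ => tvDist_nonneg

lemma genV_nonneg : 0 ≤ genV P Q := by
  rw [genV_eq_max_tvExcess]
  exact le_max_of_le_left tvExcess_nonneg

lemma iInf_tvDist_le_tvExcess {μ : ProbabilityMeasure X} (hμ : μ ∈ P) :
    ⨅ ν : Q, tvDist μ.toMeasure ν.1.toMeasure ≤ tvExcess P Q := by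
  refine le_ciSup (f := fun μ : P => ⨅ ν : Q, tvDist μ.1.toMeasure ν.1.toMeasure)
    ⟨1, ?_⟩ ⟨μ, hμ⟩
  rintro _ ⟨μ, rfl⟩
  rcases isEmpty_or_nonempty Q with hQ | ⟨⟨ν⟩⟩
  · simp [Real.iInf_of_isEmpty]
  · exact ciInf_le_of_le ⟨0, by rintro _ ⟨ν, rfl⟩; exact tvDist_nonneg⟩ ν tvDist_le_one

lemma midSet_comm (P Q : Set (ProbabilityMeasure X)) : midSet P Q = midSet Q P := by
  ext κ
  constructor <;> rintro ⟨μ, hμ, ν, hν, h⟩ <;> exact ⟨ν, hν, μ, hμ, h.trans (add_comm _ _)⟩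

lemma genKL_nonneg (M : Set (ProbabilityMeasure X)) (hP : P.Nonempty) : 0 ≤ genKL P M :=
  let ⟨μ, hμ⟩ := hP
  le_iSup₂_of_le μ hμ (le_iInf₂ fun _ _ => klDiv_nonneg _ _)

lemma genKL_midSet_le_tvExcess (hQ : Q.Nonempty) :
    genKL P (midSet P Q) ≤ tvExcess P Q := by
  have := hQ.to_subtype
  refine iSup₂_le fun μ hμ => ?_
  have hmid : ∀ ν : Q, ⨅ κ ∈ midSet P Q, klDiv μ.toMeasure κ.toMeasure
      ≤ tvDist μ.toMeasure ν.1.toMeasure := fun ν =>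
    (iInf₂_le ⟨_, isProbabilityMeasure_half_add_half _ _⟩ ⟨μ, hμ, ν, ν.2, rfl⟩).trans
      (klDiv_half_add_half_le _ _)
  refine le_trans ?_ (EReal.coe_le_coe_iff.2 (iInf_tvDist_le_tvExcess hμ))
  induction h : ⨅ κ ∈ midSet P Q, klDiv μ.toMeasure κ.toMeasure using EReal.rec with
  | bot => exact bot_le
  | top => exact absurd (h ▸ hmid (Classical.arbitrary Q)) (by simp)
  | coe x => exact EReal.coe_le_coe_iff.2 (le_ciInf fun ν => EReal.coe_le_coe_iff.1 (h ▸ hmid ν))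

lemma tvExcess_le_two_mul {A T : Set (ProbabilityMeasure X)} (hT : ConvexPM T)
    (hTne : T.Nonempty) {ε : ℝ} (hε : 0 ≤ ε)
    (h : ∀ a ∈ A, ∃ a' ∈ A, ∃ t ∈ T, tvDist a.toMeasure
      ((2 : ℝ≥0∞)⁻¹ • a'.toMeasure + (2 : ℝ≥0∞)⁻¹ • t.toMeasure) ≤ ε) :
    tvExcess A T ≤ 2 * ε := by
  have := hTne.to_subtype
  have hbdd : ∀ a : ProbabilityMeasure X,
      BddBelow (range fun s : T => tvDist a.toMeasure s.1.toMeasure) :=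
    fun _ => ⟨0, by rintro _ ⟨s, rfl⟩; exact tvDist_nonneg⟩
  have hstep : ∀ a ∈ A, ⨅ s : T, tvDist a.toMeasure s.1.toMeasure ≤ ε + tvExcess A T / 2 := by
    intro a ha
    obtain ⟨a', ha', t, ht, hclose⟩ := h a ha
    set m := (2 : ℝ≥0∞)⁻¹ • a'.toMeasure + (2 : ℝ≥0∞)⁻¹ • t.toMeasure
    have hvia : ∀ t' : T, ⨅ s : T, tvDist a.toMeasure s.1.toMeasure
        ≤ ε + tvDist a'.toMeasure t'.1.toMeasure / 2 := by
      intro t'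
      obtain ⟨s, hs, hs_eq⟩ := hT t' t'.2 t ht _ _ ENNReal.inv_two_add_inv_two
      calc ⨅ s : T, tvDist a.toMeasure s.1.toMeasure
          ≤ tvDist a.toMeasure s.toMeasure := ciInf_le (hbdd a) ⟨s, hs⟩
        _ ≤ tvDist a.toMeasure m + tvDist m s.toMeasure := tvDist_triangle
        _ ≤ ε + tvDist a'.toMeasure t'.1.toMeasure / 2 := by
          rw [hs_eq]
          exact add_le_add hclose (tvDist_half_add_half_le _)
    have : ((⨅ s : T, tvDist a.toMeasure s.1.toMeasure) - ε) * 2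
        ≤ ⨅ t' : T, tvDist a'.toMeasure t'.1.toMeasure :=
      le_ciInf fun t' => by linarith [hvia t']
    linarith [iInf_tvDist_le_tvExcess (Q := T) ha']
  have := Real.iSup_le (fun a : A => hstep a a.2)
    (add_nonneg hε (div_nonneg tvExcess_nonneg zero_le_two))
  unfold tvExcess at this ⊢
  linarith

lemma exists_mem_tvDist_lt_of_genKL_lt {M : Set (ProbabilityMeasure X)} {ε : ℝ} (hε : 0 ≤ ε)
    (h : genKL P M < (ε ^ 2 / 2 : ℝ)) {μ : ProbabilityMeasure X} (hμ : μ ∈ P) :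
    ∃ κ ∈ M, tvDist μ.toMeasure κ.toMeasure < ε := by
  have hinf := (le_iSup₂ (f := fun μ (_ : μ ∈ P) => ⨅ κ ∈ M, klDiv μ.toMeasure κ.toMeasure)
    μ hμ).trans_lt h
  simp only [iInf_lt_iff] at hinf
  obtain ⟨κ, hκ, hlt⟩ := hinf
  refine ⟨κ, hκ, lt_of_pow_lt_pow_left₀ 2 hε ?_⟩
  have := EReal.coe_lt_coe_iff.1 ((sq_tvDist_div_two_le_klDiv _ _).trans_lt hlt)
  linarith

lemma tvExcess_le_of_genKL_lt (hQ : ConvexPM Q) (hQne : Q.Nonempty) {ε : ℝ} (hε : 0 ≤ ε)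
    (h : genKL P (midSet P Q) < (ε ^ 2 / 2 : ℝ)) : tvExcess P Q ≤ 2 * ε := by
  refine tvExcess_le_two_mul hQ hQne hε fun μ hμ => ?_
  obtain ⟨κ, ⟨μ', hμ', ν, hν, hκ⟩, hlt⟩ := exists_mem_tvDist_lt_of_genKL_lt hε h hμ
  exact ⟨μ', hμ', ν, hν, hκ ▸ hlt.le⟩

lemma genJS_le_genV (hP : P.Nonempty) (hQ : Q.Nonempty) : genJS P Q ≤ genV P Q := by
  rw [genV_eq_max_tvExcess]
  have hPQ := genKL_midSet_le_tvExcess (P := P) hQ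
  have hQP := genKL_midSet_le_tvExcess (P := Q) hP
  rw [midSet_comm] at hQP
  calc genJS P Q ≤ ((1 / 2 : ℝ) : EReal) * (tvExcess P Q : EReal)
        + ((1 / 2 : ℝ) : EReal) * (tvExcess Q P : EReal) := by
        unfold genJS
        gcongr
    _ ≤ (max (tvExcess P Q) (tvExcess Q P) : ℝ) := by
        norm_cast
        linarith [le_max_left (tvExcess P Q) (tvExcess Q P),
          le_max_right (tvExcess P Q) (tvExcess Q P)]

lemma genJS_nonneg (hP : P.Nonempty) (hQ : Q.Nonempty) : 0 ≤ genJS P Q :=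
  add_nonneg (EReal.mul_nonneg (by norm_num) (genKL_nonneg _ hP))
    (EReal.mul_nonneg (by norm_num) (genKL_nonneg _ hQ))

lemma genV_le_of_genJS_lt (hP : P.Nonempty) (hQ : Q.Nonempty) (hPconv : ConvexPM P)
    (hQconv : ConvexPM Q) {ε : ℝ} (hε : 0 ≤ ε) (h : genJS P Q < (ε ^ 2 / 4 : ℝ)) :
    genV P Q ≤ 2 * ε := by
  have hJS : ((1 / 2 : ℝ) : EReal) * genKL P (midSet P Q)
      + ((1 / 2 : ℝ) : EReal) * genKL Q (midSet P Q) < (ε ^ 2 / 2 / 2 : ℝ) := by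
    rw [show ε ^ 2 / 2 / 2 = ε ^ 2 / 4 by ring]
    exact h
  have hPQ := EReal.lt_of_half_mul_lt <| (le_add_of_nonneg_right <|
    EReal.mul_nonneg (by norm_num) (genKL_nonneg _ hQ)).trans_lt hJS
  have hQP := EReal.lt_of_half_mul_lt <| (le_add_of_nonneg_left <|
    EReal.mul_nonneg (by norm_num) (genKL_nonneg _ hP)).trans_lt hJS
  rw [midSet_comm] at hQP
  rw [genV_eq_max_tvExcess]
  exact max_le (tvExcess_le_of_genKL_lt hQconv hQ hε hPQ) (tvExcess_le_of_genKL_lt hPconv hP hε hQP)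

end SetDivergences

theorem js_tendsto_zero_iff_tv_general {X : Type*} [MeasurableSpace X]
    (Pn : ℕ → Set (ProbabilityMeasure X)) (P : Set (ProbabilityMeasure X))
    (hne : ∀ n, (Pn n).Nonempty) (hconv : ∀ n, ConvexPM (Pn n))
    (hPne : P.Nonempty) (hPconv : ConvexPM P) :
    Tendsto (fun n => genJS (Pn n) P) atTop (𝓝 (0 : EReal)) ↔
    Tendsto (fun n => genV (Pn n) P) atTop (𝓝 (0 : ℝ)) := by
  constructor
  · intro hJS
    refine tendsto_order.2 ⟨fun a ha => Eventually.of_forall fun n => ha.trans_le genV_nonneg,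
      fun ε hε => ?_⟩
    have hsmall : (0 : EReal) < ((ε / 4) ^ 2 / 4 : ℝ) := EReal.coe_pos.2 (by positivity)
    filter_upwards [hJS.eventually (gt_mem_nhds hsmall)] with n hn
    linarith [genV_le_of_genJS_lt (hne n) hPne (hconv n) hPconv (by positivity) hn]
  · intro hV
    refine tendsto_of_tendsto_of_tendsto_of_le_of_le tendsto_const_nhds ?_
      (fun n => genJS_nonneg (hne n) hPne) (fun n => genJS_le_genV (hne n) hPne)
    simpa using EReal.tendsto_coe.2 hV

theorem js_tendsto_zero_iff_tv {X : Type*} [MeasurableSpace X] [TopologicalSpace X]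
    [PolishSpace X] [BorelSpace X] (Pn : ℕ → Set (ProbabilityMeasure X)) (P : Set (ProbabilityMeasure X))
    (hne : ∀ n, (Pn n).Nonempty) (hc : ∀ n, IsCompact (Pn n)) (hconv : ∀ n, ConvexPM (Pn n))
    (hPne : P.Nonempty) (hPc : IsCompact P) (hPconv : ConvexPM P) :
    Tendsto (fun n => genJS (Pn n) P) atTop (𝓝 (0 : EReal)) ↔
    Tendsto (fun n => genV (Pn n) P) atTop (𝓝 (0 : ℝ)) :=
  js_tendsto_zero_iff_tv_general Pn P hne hconv hPne hPconv
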